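/- The series Ψ(a,z) = ₁φ₁(a; 0; q², z) satisfies the contiguity relation Ψ(a,z) − Ψ(a,z/q²) = (1−a)(z/q²)Ψ(q²a,z). -/

import Mathlib

open scoped BigOperators

/-- The q-Pochhammer symbol (a;q)_n. -/
noncomputable def qPoch (a q : ℂ) (n : ℕ) : ℂ :=
  ∏ k ∈ Finset.range n, (1 - a * q ^ k)

/-- Ψ(a,z) = ₁φ₁(a; 0; q², z). -/
noncomputable def psi11 (q a z : ℂ) : ℂ :=
  ∑' n : ℕ, qPoch a (q ^ 2) n / qPoch (q ^ 2) (q ^ 2) n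
    * (-1) ^ n * q ^ (n * (n - 1)) * z ^ n

/-!
Termwise, `z ↦ z / q²` multiplies the `n`-th term by `q^{-2n}`, and
`(1 - q^{-2n}) / (q²;q²)_n = -q^{-2n} / (q²;q²)_{n-1}`; together with
`(a;q²)_n = (1 - a) (q²a;q²)_{n-1}` and `q^{n(n-1)} = q^{(n-1)(n-2)} q^{2(n-1)}`
this turns the `n`-th term of the difference into `(1 - a)(z/q²)` times the
`(n-1)`-st term of `Ψ(q²a, z)`, while the `0`-th terms cancel. All series converge
absolutely because of the Gaussian factor `q^{n(n-1)}`.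
-/

open Filter

section qPoch

variable (a q : ℂ)

lemma qPoch_zero : qPoch a q 0 = 1 := Finset.prod_range_zero _

lemma qPoch_succ (n : ℕ) : qPoch a q (n + 1) = qPoch a q n * (1 - a * q ^ n) :=
  Finset.prod_range_succ _ _

lemma qPoch_succ' (n : ℕ) : qPoch a q (n + 1) = (1 - a) * qPoch (a * q) q n := by
  rw [qPoch, Finset.prod_range_succ', pow_zero, mul_one, mul_comm, qPoch]
  congr 1
  exact Finset.prod_congr rfl fun k _ => by ring

variable {a q}

lemma norm_qPoch_le (hq : ‖q‖ ≤ 1) (n : ℕ) : ‖qPoch a q n‖ ≤ (1 + ‖a‖) ^ n := by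
  rw [qPoch, norm_prod]
  refine (Finset.prod_le_prod (g := fun _ => 1 + ‖a‖) (fun _ _ => norm_nonneg _) fun k _ => ?_).trans_eq
    (by simp)
  calc ‖1 - a * q ^ k‖ ≤ 1 + ‖a‖ * ‖q‖ ^ k := by
        simpa [norm_mul, norm_pow] using norm_sub_le (1 : ℂ) (a * q ^ k)
    _ ≤ 1 + ‖a‖ := by
        gcongr
        exact mul_le_of_le_one_right (norm_nonneg a) (pow_le_one₀ (norm_nonneg q) hq)

lemma pow_le_norm_qPoch (ha : ‖a‖ ≤ 1) (hq : ‖q‖ ≤ 1) (n : ℕ) :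
    (1 - ‖a‖) ^ n ≤ ‖qPoch a q n‖ := by
  rw [qPoch, norm_prod]
  refine le_of_eq_of_le (by simp) (Finset.prod_le_prod (fun _ _ => sub_nonneg.2 ha) fun k _ => ?_)
  calc 1 - ‖a‖ ≤ 1 - ‖a‖ * ‖q‖ ^ k := by
        gcongr
        exact mul_le_of_le_one_right (norm_nonneg a) (pow_le_one₀ (norm_nonneg q) hq)
    _ ≤ ‖1 - a * q ^ k‖ := by
        simpa [norm_mul, norm_pow] using norm_sub_norm_le (1 : ℂ) (a * q ^ k)

lemma qPoch_ne_zero (ha : ‖a‖ < 1) (hq : ‖q‖ ≤ 1) (n : ℕ) : qPoch a q n ≠ 0 :=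
  norm_pos_iff.1 <| (pow_pos (sub_pos.2 ha) n).trans_le (pow_le_norm_qPoch ha.le hq n)

end qPoch

lemma add_one_mul_add_one_sub_one (n : ℕ) : (n + 1) * (n + 1 - 1) = n * (n - 1) + 2 * n := by
  cases n with
  | zero => rfl
  | succ m => simp only [Nat.add_sub_cancel]; ring

lemma summable_pow_mul_pow_mul_sub_one {C r : ℝ} (hC : 0 ≤ C) (hr₀ : 0 ≤ r) (hr : r < 1) :
    Summable fun n : ℕ => C ^ n * r ^ (n * (n - 1)) := by
  refine summable_of_ratio_norm_eventually_le (r := 1 / 2) (by norm_num) ?_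
  have hratio : Tendsto (fun n : ℕ => C * (r ^ 2) ^ n) atTop (nhds 0) := by
    simpa using (tendsto_pow_atTop_nhds_zero_of_lt_one (by positivity)
      (pow_lt_one₀ hr₀ hr two_ne_zero)).const_mul C
  filter_upwards [hratio.eventually_le_const (by norm_num : (0 : ℝ) < 1 / 2)] with n hn
  rw [Real.norm_of_nonneg (by positivity), Real.norm_of_nonneg (by positivity),
    add_one_mul_add_one_sub_one, pow_add r, pow_mul r 2, pow_succ]
  calc C ^ n * C * (r ^ (n * (n - 1)) * (r ^ 2) ^ n)
      = C * (r ^ 2) ^ n * (C ^ n * r ^ (n * (n - 1))) := by ring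
    _ ≤ 1 / 2 * (C ^ n * r ^ (n * (n - 1))) := by gcongr

noncomputable def psi11Term (q a z : ℂ) (n : ℕ) : ℂ :=
  qPoch a (q ^ 2) n / qPoch (q ^ 2) (q ^ 2) n * (-1) ^ n * q ^ (n * (n - 1)) * z ^ n

lemma psi11_eq_tsum (q a z : ℂ) : psi11 q a z = ∑' n, psi11Term q a z n := rfl

lemma psi11Term_zero (q a z : ℂ) : psi11Term q a z 0 = 1 := by
  simp [psi11Term, qPoch_zero]

section convergence

variable {q : ℂ} (a z : ℂ)

lemma norm_psi11Term_le (hq : ‖q‖ < 1) (n : ℕ) :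
    ‖psi11Term q a z n‖ ≤ ((1 + ‖a‖) / (1 - ‖q‖ ^ 2) * ‖z‖) ^ n * ‖q‖ ^ (n * (n - 1)) := by
  have hq2 : ‖q ^ 2‖ < 1 := by rw [norm_pow]; exact pow_lt_one₀ (norm_nonneg q) hq two_ne_zero
  have hnum := norm_qPoch_le (a := a) hq2.le n
  have hden := pow_le_norm_qPoch hq2.le hq2.le n
  rw [norm_pow] at hden
  have hden₀ : 0 < (1 - ‖q‖ ^ 2) ^ n := pow_pos (by rwa [← norm_pow, sub_pos]) n
  simp only [psi11Term, norm_mul, norm_div, norm_pow, norm_neg, norm_one, one_pow, mul_one]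
  rw [mul_pow, div_pow, mul_right_comm]
  gcongr

lemma summable_psi11Term (hq : ‖q‖ < 1) : Summable (psi11Term q a z) := by
  have hq2 : 0 < 1 - ‖q‖ ^ 2 := sub_pos.2 (pow_lt_one₀ (norm_nonneg q) hq two_ne_zero)
  exact .of_norm_bounded (summable_pow_mul_pow_mul_sub_one (by positivity) (norm_nonneg q) hq)
    (norm_psi11Term_le a z hq)

end convergence

lemma psi11Term_succ_sub {q : ℂ} (a z : ℂ) (hq : ‖q‖ < 1) (hq0 : q ≠ 0) (n : ℕ) :
    psi11Term q a z (n + 1) - psi11Term q a (z / q ^ 2) (n + 1)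
      = (1 - a) * (z / q ^ 2) * psi11Term q (q ^ 2 * a) z n := by
  have hq2 : ‖q ^ 2‖ < 1 := by rw [norm_pow]; exact pow_lt_one₀ (norm_nonneg q) hq two_ne_zero
  have hden : qPoch (q ^ 2) (q ^ 2) (n + 1) ≠ 0 := qPoch_ne_zero hq2 hq2.le (n + 1)
  rw [qPoch_succ] at hden
  obtain ⟨hden, hfactor⟩ := mul_ne_zero_iff.1 hden
  simp only [psi11Term]
  rw [qPoch_succ', qPoch_succ, add_one_mul_add_one_sub_one, mul_comm a, div_pow]
  field_simp
  ring

/-- Contiguity relation Ψ(a,z) − Ψ(a,z/q²) = (1−a)(z/q²)Ψ(q²a,z). -/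
theorem psi11_contiguity₂ (q a z : ℂ) (hq : ‖q‖ < 1) (hq0 : q ≠ 0) :
    psi11 q a z - psi11 q a (z / q ^ 2)
      = (1 - a) * (z / q ^ 2) * psi11 q (q ^ 2 * a) z := by
  have hs := summable_psi11Term a z hq
  have hs' := summable_psi11Term a (z / q ^ 2) hq
  rw [psi11_eq_tsum, psi11_eq_tsum, psi11_eq_tsum, ← hs.tsum_sub hs',
    (hs.sub hs').tsum_eq_zero_add, ← tsum_mul_left]
  simp only [psi11Term_zero, sub_self, zero_add, psi11Term_succ_sub a z hq hq0]
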